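/- arXiv:1406.0018 — 2 statements merged into one kernel-verified Lean document; each statement's English description precedes it below -/
import Mathlib

section
/- Let F, G : ℝ⁴ → ℝ be smooth functions of (w, z, x, y), and let Q = ∂_w∂_x + ∂_z∂_y − F_y∂_x² − G_x∂_y² + (F_x + G_y)∂_x∂_y. Consider ℝ⁵ with coordinates (w, z, x, y, λ) and the vector fields X₁ = ∂_w − F_y∂_x + (G_y + λ)∂_y and X₂ = ∂_z + (F_x − λ)∂_x − G_x∂_y. Then at every point of ℝ⁵ the Lie bracket satisfies [X₁, X₂] = Q(F)∂_x − Q(G)∂_y. In particular, X₁ and X₂ commute identically if and only if (F, G) satisfies the hyper-Hermitian system Q(F) = 0, Q(G) = 0. -/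
noncomputable section

/-- Partial derivative of `f` along the `i`-th coordinate direction on `ℝⁿ`.
Coordinates on `ℝ⁴` are `(w, z, x, y) = (0, 1, 2, 3)`; on `ℝ⁵` they are
`(w, z, x, y, λ) = (0, 1, 2, 3, 4)`. -/
def pd {n : ℕ} (i : Fin n) (f : (Fin n → ℝ) → ℝ) : (Fin n → ℝ) → ℝ :=
  fun x => fderiv ℝ f x (Pi.single i 1)

/-- Lie bracket of vector fields on `ℝⁿ`:
`[X,Y](p) = (DY)(p)(X(p)) − (DX)(p)(Y(p))`. -/
def lieBr {n : ℕ} (X Y : (Fin n → ℝ) → (Fin n → ℝ)) :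
    (Fin n → ℝ) → (Fin n → ℝ) :=
  fun p => fderiv ℝ Y p (X p) - fderiv ℝ X p (Y p)

/-- Projection `(w, z, x, y, λ) ↦ (w, z, x, y)`. -/
def π4 (s : Fin 5 → ℝ) : Fin 4 → ℝ := ![s 0, s 1, s 2, s 3]

/-- The operator `Q = ∂_w∂_x + ∂_z∂_y − F_y∂_x² − G_x∂_y² + (F_x + G_y)∂_x∂_y`
applied to `h`. -/
def Qop (F G h : (Fin 4 → ℝ) → ℝ) : (Fin 4 → ℝ) → ℝ :=
  fun x =>
    pd 0 (pd 2 h) x + pd 1 (pd 3 h) x - pd 3 F x * pd 2 (pd 2 h) x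
      - pd 2 G x * pd 3 (pd 3 h) x + (pd 2 F x + pd 3 G x) * pd 2 (pd 3 h) x

/-- `X₁ = ∂_w − F_y∂_x + (G_y + λ)∂_y`. -/
def hhLax1 (F G : (Fin 4 → ℝ) → ℝ) : (Fin 5 → ℝ) → (Fin 5 → ℝ) :=
  fun s => ![1, 0, -(pd 3 F (π4 s)), pd 3 G (π4 s) + s 4, 0]

/-- `X₂ = ∂_z + (F_x − λ)∂_x − G_x∂_y`. -/
def hhLax2 (F G : (Fin 4 → ℝ) → ℝ) : (Fin 5 → ℝ) → (Fin 5 → ℝ) :=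
  fun s => ![0, 1, pd 2 F (π4 s) - s 4, -(pd 2 G (π4 s)), 0]

/-!
Neither field has a `∂_λ` component, so the bracket only differentiates the coefficients of
`X₁, X₂` along `(w, z, x, y)`, and the chain rule through the projection gives
`[X₁, X₂] = (X₁(F_x) + X₂(F_y)) ∂_x − (X₁(G_x) + X₂(G_y)) ∂_y`. Expanding, the terms in `λ` are
`λ (F_xy − F_yx)` and `λ (G_xy − G_yx)`, which vanish by symmetry of second derivatives; what
remains is `Q(F)` and `Q(G)`.
-/

section PartialDerivatives

variable {n : ℕ} {f : (Fin n → ℝ) → ℝ}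

theorem fderiv_apply_eq_sum_pd (x u : Fin n → ℝ) :
    fderiv ℝ f x u = ∑ i, u i * pd i f x := by
  conv_lhs => rw [pi_eq_sum_univ' u]
  simp [pd, map_sum]

theorem ContDiff.differentiable_pd (hf : ContDiff ℝ 2 f) (i : Fin n) :
    Differentiable ℝ (pd i f) :=
  ((hf.fderiv_right (m := 1) (by norm_num)).clm_apply contDiff_const).differentiable one_ne_zero

theorem pd_pd_eq_fderiv_fderiv {x : Fin n → ℝ} (hf : DifferentiableAt ℝ (fderiv ℝ f) x)
    (i j : Fin n) :
    pd i (pd j f) x = fderiv ℝ (fderiv ℝ f) x (Pi.single i 1) (Pi.single j 1) := by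
  change fderiv ℝ (fun y => fderiv ℝ f y (Pi.single j 1)) x (Pi.single i 1) = _
  rw [fderiv_clm_apply hf (differentiableAt_const _)]
  simp

theorem pd_pd_comm (hf : ContDiff ℝ 2 f) (i j : Fin n) (x : Fin n → ℝ) :
    pd i (pd j f) x = pd j (pd i f) x := by
  have hf' : DifferentiableAt ℝ (fderiv ℝ f) x :=
    (hf.fderiv_right (m := 1) (by norm_num)).differentiable one_ne_zero x
  rw [pd_pd_eq_fderiv_fderiv hf', pd_pd_eq_fderiv_fderiv hf',
    hf.contDiffAt.isSymmSndFDerivAt (by simp)]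

end PartialDerivatives

theorem π4_eq_compRightL (s : Fin 5 → ℝ) :
    π4 s = Pi.compRightL ℝ (fun _ => ℝ) Fin.castSucc s := by
  funext j; fin_cases j <;> rfl

theorem DifferentiableAt.hasFDerivAt_comp_π4 {h : (Fin 4 → ℝ) → ℝ} {s : Fin 5 → ℝ}
    (hh : DifferentiableAt ℝ h (π4 s)) :
    HasFDerivAt (fun t => h (π4 t))
      ((fderiv ℝ h (π4 s)).comp (Pi.compRightL ℝ (fun _ => ℝ) Fin.castSucc)) s := by
  simp only [π4_eq_compRightL] at hh ⊢
  exact hh.hasFDerivAt.comp s (ContinuousLinearMap.hasFDerivAt _)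

theorem π4_surjective : Function.Surjective π4 :=
  fun x => ⟨Fin.snoc x 0, by funext j; fin_cases j <;> rfl⟩

section LaxPair

variable {F G : (Fin 4 → ℝ) → ℝ} {s : Fin 5 → ℝ}

theorem fderiv_hhLax1_apply (hF : DifferentiableAt ℝ (pd 3 F) (π4 s))
    (hG : DifferentiableAt ℝ (pd 3 G) (π4 s)) (v : Fin 5 → ℝ) :
    fderiv ℝ (hhLax1 F G) s v =
      ![0, 0, -fderiv ℝ (pd 3 F) (π4 s) (π4 v), fderiv ℝ (pd 3 G) (π4 s) (π4 v) + v 4, 0] := by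
  have hX : HasFDerivAt (hhLax1 F G)
      (.pi ![0, 0, -(fderiv ℝ (pd 3 F) (π4 s)).comp (Pi.compRightL ℝ (fun _ => ℝ) Fin.castSucc),
        (fderiv ℝ (pd 3 G) (π4 s)).comp (Pi.compRightL ℝ (fun _ => ℝ) Fin.castSucc) + .proj 4,
        0]) s := by
    refine hasFDerivAt_pi'' fun i => ?_
    rw [ContinuousLinearMap.proj_pi]
    fin_cases i
    exacts [hasFDerivAt_const _ _, hasFDerivAt_const _ _, hF.hasFDerivAt_comp_π4.neg,
      hG.hasFDerivAt_comp_π4.add (hasFDerivAt_apply 4 s), hasFDerivAt_const _ _]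
  rw [hX.fderiv]
  funext i; fin_cases i <;> simp [π4_eq_compRightL]

theorem fderiv_hhLax2_apply (hF : DifferentiableAt ℝ (pd 2 F) (π4 s))
    (hG : DifferentiableAt ℝ (pd 2 G) (π4 s)) (v : Fin 5 → ℝ) :
    fderiv ℝ (hhLax2 F G) s v =
      ![0, 0, fderiv ℝ (pd 2 F) (π4 s) (π4 v) - v 4, -fderiv ℝ (pd 2 G) (π4 s) (π4 v), 0] := by
  have hX : HasFDerivAt (hhLax2 F G)
      (.pi ![0, 0,
        (fderiv ℝ (pd 2 F) (π4 s)).comp (Pi.compRightL ℝ (fun _ => ℝ) Fin.castSucc) - .proj 4,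
        -(fderiv ℝ (pd 2 G) (π4 s)).comp (Pi.compRightL ℝ (fun _ => ℝ) Fin.castSucc), 0]) s := by
    refine hasFDerivAt_pi'' fun i => ?_
    rw [ContinuousLinearMap.proj_pi]
    fin_cases i
    exacts [hasFDerivAt_const _ _, hasFDerivAt_const _ _,
      hF.hasFDerivAt_comp_π4.sub (hasFDerivAt_apply 4 s), hG.hasFDerivAt_comp_π4.neg,
      hasFDerivAt_const _ _]
  rw [hX.fderiv]
  funext i; fin_cases i <;> simp [π4_eq_compRightL]

theorem lieBr_hhLax1_hhLax2 (hF : ContDiff ℝ 2 F) (hG : ContDiff ℝ 2 G) (s : Fin 5 → ℝ) :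
    lieBr (hhLax1 F G) (hhLax2 F G) s = ![0, 0, Qop F G F (π4 s), -Qop F G G (π4 s), 0] := by
  rw [lieBr, fderiv_hhLax1_apply (hF.differentiable_pd 3 _) (hG.differentiable_pd 3 _),
    fderiv_hhLax2_apply (hF.differentiable_pd 2 _) (hG.differentiable_pd 2 _)]
  simp only [fderiv_apply_eq_sum_pd, Fin.sum_univ_four]
  rw [pd_pd_comm hF 3 2, pd_pd_comm hG 3 2]
  funext i; fin_cases i <;> simp [Qop, π4, hhLax1, hhLax2] <;> ring

end LaxPair

/-- For smooth `F, G`, one has `[X₁, X₂] = Q(F)∂_x − Q(G)∂_y` at every point of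
`ℝ⁵`; in particular `X₁` and `X₂` commute identically iff `(F, G)` solves the
hyper-Hermitian system `Q(F) = 0`, `Q(G) = 0`. -/
theorem hyperhermitian_lax_bracket
    (F G : (Fin 4 → ℝ) → ℝ)
    (hF : ContDiff ℝ (⊤ : ℕ∞) F)
    (hG : ContDiff ℝ (⊤ : ℕ∞) G) :
    (∀ s : Fin 5 → ℝ,
      lieBr (hhLax1 F G) (hhLax2 F G) s
        = ![0, 0, Qop F G F (π4 s), -(Qop F G G (π4 s)), 0]) ∧
    ((∀ s : Fin 5 → ℝ, lieBr (hhLax1 F G) (hhLax2 F G) s = 0) ↔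
      (∀ x : Fin 4 → ℝ, Qop F G F x = 0 ∧ Qop F G G x = 0)) := by
  have hbr := lieBr_hhLax1_hhLax2 (hF.of_le (WithTop.coe_le_coe.2 le_top))
    (hG.of_le (WithTop.coe_le_coe.2 le_top))
  refine ⟨hbr, fun h x => ?_, fun h s => ?_⟩
  · obtain ⟨s, rfl⟩ := π4_surjective x
    have hQ := hbr s
    rw [h s] at hQ
    exact ⟨by simpa [eq_comm] using congrFun hQ 2, by simpa [eq_comm] using congrFun hQ 3⟩
  · rw [hbr, (h (π4 s)).1, (h (π4 s)).2]
    funext j; fin_cases j <;> simp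
end
end

section
/- Let θ : ℝ⁴ → ℝ be smooth with coordinates (w, z, x, y), set F := θ_y, G := θ_x, f := θ_{yz} + θ_{xw} + θ_{xy}² − θ_{xx}θ_{yy}, and let Q = ∂_w∂_x + ∂_z∂_y − F_y∂_x² − G_x∂_y² + (F_x + G_y)∂_x∂_y = ∂_w∂_x + ∂_z∂_y − θ_{yy}∂_x² − θ_{xx}∂_y² + 2θ_{xy}∂_x∂_y. Then Q(F) = ∂_y f and Q(G) = ∂_x f identically. Consequently, if θ satisfies Plebański's second heavenly equation f = 0, then (F, G) = (θ_y, θ_x) satisfies the hyper-Hermitian system Q(F) = 0, Q(G) = 0. -/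
noncomputable section

/-- The Plebański expression `f = θ_{yz} + θ_{xw} + θ_{xy}² − θ_{xx}θ_{yy}`. -/
def plebF (θ : (Fin 4 → ℝ) → ℝ) : (Fin 4 → ℝ) → ℝ :=
  fun x =>
    pd 1 (pd 3 θ) x + pd 0 (pd 2 θ) x + (pd 2 (pd 3 θ) x) ^ 2
      - pd 2 (pd 2 θ) x * pd 3 (pd 3 θ) x

/-! With `F = θ_y` and `G = θ_x` one has `F_y = θ_yy`, `G_x = θ_xx` and `F_x + G_y = 2 θ_xy`, so `Q`
is the linearisation of `f` at `θ`. Hence differentiating `f` by the Leibniz rule and commuting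
third partial derivatives of `θ` (Schwarz) turns `∂_y f` into `Q(θ_y)` and `∂_x f` into `Q(θ_x)`. -/

section PartialDerivatives

variable {n : ℕ} {f g : (Fin n → ℝ) → ℝ} {x : Fin n → ℝ}

theorem ContDiff.pd {k : WithTop ℕ∞} (hf : ContDiff ℝ (k + 1) f) (i : Fin n) :
    ContDiff ℝ k (pd i f) :=
  (hf.fderiv_right le_rfl).clm_apply contDiff_const

theorem pd_comm (hf : ContDiff ℝ 2 f) (i j : Fin n) : pd i (pd j f) = pd j (pd i f) := by
  funext x
  have hdf : DifferentiableAt ℝ (fderiv ℝ f) x :=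
    (hf.fderiv_right (m := 1) le_rfl).differentiable one_ne_zero x
  have hsymm : IsSymmSndFDerivAt ℝ f x := hf.contDiffAt.isSymmSndFDerivAt (by simp)
  have hpd : ∀ k v, fderiv ℝ (pd k f) x v = fderiv ℝ (fderiv ℝ f) x v (Pi.single k 1) :=
    fun k v => by
      change fderiv ℝ (fun y => fderiv ℝ f y (Pi.single k 1)) x v = _
      simp [fderiv_clm_apply hdf (differentiableAt_const _)]
  change fderiv ℝ (pd j f) x _ = fderiv ℝ (pd i f) x _
  rw [hpd, hpd, hsymm]

theorem pd_add (hf : DifferentiableAt ℝ f x) (hg : DifferentiableAt ℝ g x) (i : Fin n) :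
    pd i (f + g) x = pd i f x + pd i g x := by
  simp [pd, fderiv_add hf hg]

theorem pd_sub (hf : DifferentiableAt ℝ f x) (hg : DifferentiableAt ℝ g x) (i : Fin n) :
    pd i (f - g) x = pd i f x - pd i g x := by
  simp [pd, fderiv_sub hf hg]

theorem pd_mul (hf : DifferentiableAt ℝ f x) (hg : DifferentiableAt ℝ g x) (i : Fin n) :
    pd i (f * g) x = pd i f x * g x + f x * pd i g x := by
  simp [pd, fderiv_mul hf hg]
  ring

theorem pd_pow (hf : DifferentiableAt ℝ f x) (k : ℕ) (i : Fin n) :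
    pd i (f ^ k) x = k * f x ^ (k - 1) * pd i f x := by
  simp [pd, fderiv_pow k hf]

end PartialDerivatives

section Heavenly

variable {θ : (Fin 4 → ℝ) → ℝ}

theorem pd_plebF (hθ : ContDiff ℝ 3 θ) (k : Fin 4) (x : Fin 4 → ℝ) :
    pd k (plebF θ) x =
      pd k (pd 1 (pd 3 θ)) x + pd k (pd 0 (pd 2 θ)) x
        + 2 * pd 2 (pd 3 θ) x * pd k (pd 2 (pd 3 θ)) x
        - (pd k (pd 2 (pd 2 θ)) x * pd 3 (pd 3 θ) x
            + pd 2 (pd 2 θ) x * pd k (pd 3 (pd 3 θ)) x) := by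
  have hd : ∀ i j, DifferentiableAt ℝ (pd i (pd j θ)) x := fun i j =>
    ((hθ.pd j).pd i).differentiable one_ne_zero x
  have hplebF : plebF θ = pd 1 (pd 3 θ) + pd 0 (pd 2 θ) + pd 2 (pd 3 θ) ^ 2
      - pd 2 (pd 2 θ) * pd 3 (pd 3 θ) := rfl
  rw [hplebF, pd_sub (((hd 1 3).add (hd 0 2)).add ((hd 2 3).pow 2)) ((hd 2 2).mul (hd 3 3)),
    pd_add ((hd 1 3).add (hd 0 2)) ((hd 2 3).pow 2), pd_add (hd 1 3) (hd 0 2),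
    pd_pow (hd 2 3), pd_mul (hd 2 2) (hd 3 3)]
  norm_num

theorem Qop_pd_three_eq_pd_plebF (hθ : ContDiff ℝ 3 θ) (x : Fin 4 → ℝ) :
    Qop (pd 3 θ) (pd 2 θ) (pd 3 θ) x = pd 3 (plebF θ) x := by
  rw [pd_plebF hθ 3 x]
  simp only [Qop, pd_comm (hθ.of_le (by norm_num)) 3 2, pd_comm (hθ.pd 3) 3 1,
    pd_comm (hθ.pd 2) 3 0, pd_comm (hθ.pd 3) 3 2, pd_comm (hθ.pd 2) 3 2]
  ring

theorem Qop_pd_two_eq_pd_plebF (hθ : ContDiff ℝ 3 θ) (x : Fin 4 → ℝ) :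
    Qop (pd 3 θ) (pd 2 θ) (pd 2 θ) x = pd 2 (plebF θ) x := by
  rw [pd_plebF hθ 2 x]
  simp only [Qop, pd_comm (hθ.of_le (by norm_num)) 3 2, pd_comm (hθ.pd 3) 3 2,
    pd_comm (hθ.pd 3) 2 1, pd_comm (hθ.pd 2) 2 0]
  ring

end Heavenly

/-- For `F = θ_y`, `G = θ_x` one has `Q(F) = ∂_y f` and `Q(G) = ∂_x f`
identically; consequently, if `θ` solves Plebański's second heavenly equation
`f = 0`, then `(F, G)` solves the hyper-Hermitian system `Q(F) = 0`, `Q(G) = 0`. -/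
theorem heavenly_gives_hyperhermitian
    (θ : (Fin 4 → ℝ) → ℝ)
    (hθ : ContDiff ℝ (⊤ : ℕ∞) θ) :
    (∀ x : Fin 4 → ℝ,
      Qop (pd 3 θ) (pd 2 θ) (pd 3 θ) x = pd 3 (plebF θ) x ∧
      Qop (pd 3 θ) (pd 2 θ) (pd 2 θ) x = pd 2 (plebF θ) x) ∧
    ((∀ x : Fin 4 → ℝ, plebF θ x = 0) →
      ∀ x : Fin 4 → ℝ,
        Qop (pd 3 θ) (pd 2 θ) (pd 3 θ) x = 0 ∧
        Qop (pd 3 θ) (pd 2 θ) (pd 2 θ) x = 0) := by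
  have h3 : ContDiff ℝ 3 θ := hθ.of_le (WithTop.coe_le_coe.mpr le_top)
  refine ⟨fun x => ⟨Qop_pd_three_eq_pd_plebF h3 x, Qop_pd_two_eq_pd_plebF h3 x⟩,
    fun hf x => ?_⟩
  have hpd_zero : ∀ i, pd i (plebF θ) x = 0 := fun i => by simp [funext hf, pd]
  exact ⟨(Qop_pd_three_eq_pd_plebF h3 x).trans (hpd_zero 3),
    (Qop_pd_two_eq_pd_plebF h3 x).trans (hpd_zero 2)⟩
end
end
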